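/- Let f be a t-sparse multilinear polynomial over the reals (or any field) in n variables with a non-zero constant term, viewed as a function on {0,1}^n. Let D be a locally α-smooth distribution over {0,1}^n. Then Pr_{x∼D}[f(x) ≠ 0] ≥ (1/(1+α))^{log₂ t}. -/

import Mathlib

/-!
Write `f = g + x_i h` with `g, h` free of `x_i`, so that `|supp g| + |supp h| = t` and `f` equals
`g` on the slice `x_i = 0` and `g + h` on the slice `x_i = 1`. Restricting a locally `α`-smooth
distribution to a slice, or averaging its two slices, keeps it locally `α`-smooth, and smoothness
across the edge `{x, x ⊕ e_i}` gives each slice at least a `1/(1+α)` share of the mass.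

If `g + h` has non-zero constant term, induction applies to `g` and to `g + h` on their slices,
both of sparsity at most `t`. Otherwise `h(∅) ≠ 0`, and one of `g`, `h` has sparsity at most `t/2`.
For `g`, keep only the slice `x_i = 0`. For `h`, wherever `h(x) ≠ 0` one of `g(x)`, `g(x) + h(x)`
is non-zero, so `f` is non-zero on a `1/(1+α)` share of that edge, and induction applies to `h`
under the averaged distribution. Each halving of the sparsity costs a factor `1/(1+α)`.
-/

open Finset Function Real

namespace SparseMultilinear

variable {ι G : Type*} [Fintype ι] [AddCommGroup G]

/-- The value of `∑_T c_T ∏_{j ∈ T} x_j` at `x`: only the monomials `T ⊆ {j | x j}` survive. -/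
def eval (c : Finset ι → G) (x : ι → Bool) : G :=
  ∑ T ∈ (univ.filter fun j => x j).powerset, c T

lemma eval_add (c d : Finset ι → G) (x : ι → Bool) : eval (c + d) x = eval c x + eval d x :=
  sum_add_distrib

lemma eval_eq_sum_mul_prod {R : Type*} [CommRing R] (c : Finset ι → R) (x : ι → Bool) :
    eval c x = ∑ T, c T * ∏ j ∈ T, if x j then (1 : R) else 0 := by
  simp only [prod_boole, mul_ite, mul_one, mul_zero, ← sum_filter, eval]
  congr 1; ext T; simp [subset_iff]

section Restrict

variable [DecidableEq ι]

/-- `f = g + x_i h` with `g = restrictZero i c` and `h = pderiv i c`, both free of `x_i`. -/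
def restrictZero (i : ι) (c : Finset ι → G) (T : Finset ι) : G :=
  if i ∈ T then 0 else c T

def pderiv (i : ι) (c : Finset ι → G) (T : Finset ι) : G :=
  if i ∈ T then 0 else c (insert i T)

lemma filter_update_false (x : ι → Bool) (i : ι) :
    (univ.filter fun j => update x i false j) = (univ.filter fun j => x j).erase i := by
  ext j; by_cases h : j = i <;> simp [h]

lemma filter_update_true (x : ι → Bool) (i : ι) :
    (univ.filter fun j => update x i true j) = insert i ((univ.filter fun j => x j).erase i) := by
  ext j; by_cases h : j = i <;> simp [h]

lemma eval_eq_sum_powerset_erase {c : Finset ι → G} {i : ι} (hc : ∀ T, i ∈ T → c T = 0)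
    (x : ι → Bool) : eval c x = ∑ T ∈ ((univ.filter fun j => x j).erase i).powerset, c T :=
  (sum_subset (powerset_mono.2 (erase_subset _ _)) fun T _ hT =>
    hc T (by simp_all [subset_erase])).symm

lemma eval_update_false (c : Finset ι → G) (i : ι) (x : ι → Bool) :
    eval c (update x i false) = eval (restrictZero i c) x := by
  rw [eval_eq_sum_powerset_erase (c := restrictZero i c) (fun T hT => if_pos hT), eval,
    filter_update_false]
  refine sum_congr rfl fun T hT => (if_neg ?_).symm
  exact (subset_erase.1 (mem_powerset.1 hT)).2

lemma eval_update_true (c : Finset ι → G) (i : ι) (x : ι → Bool) :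
    eval c (update x i true) = eval (restrictZero i c) x + eval (pderiv i c) x := by
  rw [eval_eq_sum_powerset_erase (c := restrictZero i c) (fun T hT => if_pos hT),
    eval_eq_sum_powerset_erase (c := pderiv i c) (fun T hT => if_pos hT), eval,
    filter_update_true, sum_powerset_insert (notMem_erase _ _)]
  congr 1 <;> refine sum_congr rfl fun T hT => (if_neg ?_).symm <;>
    exact (subset_erase.1 (mem_powerset.1 hT)).2

end Restrict

section Support

variable [DecidableEq G]

def supp (c : Finset ι → G) : Finset (Finset ι) := univ.filter fun T => c T ≠ 0

@[simp]
lemma mem_supp {c : Finset ι → G} {T : Finset ι} : T ∈ supp c ↔ c T ≠ 0 := by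
  simp [supp]

lemma one_le_card_supp {c : Finset ι → G} (hc : c ∅ ≠ 0) : 1 ≤ #(supp c) :=
  card_pos.2 ⟨∅, mem_supp.2 hc⟩

lemma supp_add_subset_powerset {s : Finset ι} {c d : Finset ι → G} (hc : supp c ⊆ s.powerset)
    (hd : supp d ⊆ s.powerset) : supp (c + d) ⊆ s.powerset := fun T hT => by
  by_cases h : c T = 0
  · exact hd (by simp_all)
  · exact hc (mem_supp.2 h)

variable [DecidableEq ι]

lemma card_supp_add_le (c d : Finset ι → G) : #(supp (c + d)) ≤ #(supp c) + #(supp d) := by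
  refine (card_le_card fun T hT => ?_).trans (card_union_le _ _)
  contrapose! hT
  simp_all

lemma card_supp_restrictZero_add_card_supp_pderiv (i : ι) (c : Finset ι → G) :
    #(supp (restrictZero i c)) + #(supp (pderiv i c)) = #(supp c) := by
  have h0 : supp (restrictZero i c) = (supp c).filter (i ∉ ·) := by
    ext T; by_cases h : i ∈ T <;> simp [restrictZero, h]
  have h1 : #(supp (pderiv i c)) = #((supp c).filter (i ∈ ·)) := by
    refine card_nbij' (insert i) (·.erase i) ?_ ?_ ?_ ?_ <;> intro T hT <;>
      by_cases h : i ∈ T <;> simp_all [pderiv]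
  rw [h0, h1, add_comm, card_filter_add_card_filter_not]

lemma supp_restrictZero_subset_powerset {i : ι} {s : Finset ι} {c : Finset ι → G}
    (hc : supp c ⊆ (insert i s).powerset) : supp (restrictZero i c) ⊆ s.powerset := by
  intro T hT
  by_cases h : i ∈ T
  · simp_all [restrictZero]
  · simp only [mem_supp, restrictZero, h, if_false] at hT
    exact mem_powerset.2 ((subset_insert_iff_of_notMem h).1 (mem_powerset.1 (hc (mem_supp.2 hT))))

lemma supp_pderiv_subset_powerset {i : ι} {s : Finset ι} {c : Finset ι → G}
    (hc : supp c ⊆ (insert i s).powerset) : supp (pderiv i c) ⊆ s.powerset := by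
  intro T hT
  by_cases h : i ∈ T
  · simp_all [pderiv]
  · simp only [mem_supp, pderiv, h, if_false] at hT
    exact mem_powerset.2 ((subset_insert_iff_of_notMem h).1
      ((subset_insert i T).trans (mem_powerset.1 (hc (mem_supp.2 hT)))))

end Support

section Hamming

variable {β : ι → Type*} [∀ i, DecidableEq (β i)] [DecidableEq ι]

lemma hammingDist_update_update_le (x y : ∀ i, β i) (i : ι) (a : β i) :
    hammingDist (update x i a) (update y i a) ≤ hammingDist x y :=
  card_le_card fun j => by by_cases h : j = i <;> simp_all

lemma hammingDist_update_le_one (x : ∀ i, β i) (i : ι) (a : β i) :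
    hammingDist x (update x i a) ≤ 1 :=
  (card_le_card fun j hj => mem_singleton.2 (by by_contra h; simp_all)).trans_eq (card_singleton i)

end Hamming

lemma sum_comp_update_false_add_sum_comp_update_true {M : Type*} [AddCommMonoid M]
    [DecidableEq ι] (F : (ι → Bool) → M) (i : ι) :
    ∑ x, F (update x i false) + ∑ x, F (update x i true) = ∑ x, F x + ∑ x, F x := by
  have hflip : Involutive fun x : ι → Bool => update x i (!x i) := fun x => by simp
  conv_rhs => enter [2]; rw [← hflip.bijective.sum_comp F]
  rw [← sum_add_distrib, ← sum_add_distrib]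
  refine sum_congr rfl fun x _ => ?_
  have hx := update_eq_self i x
  cases h : x i <;> rw [h] at hx <;> simp [hx, add_comm]

def IsLocallySmooth (α : ℝ) (D : (ι → Bool) → ℝ) : Prop :=
  ∀ x x', hammingDist x x' = 1 → D x ≤ α * D x'

namespace IsLocallySmooth

variable {α : ℝ} {D : (ι → Bool) → ℝ}

lemma le_mul_of_hammingDist_le_one (hα : 1 ≤ α) (hD0 : 0 ≤ D) (hD : IsLocallySmooth α D)
    {x y : ι → Bool} (h : hammingDist x y ≤ 1) : D x ≤ α * D y := by
  rcases Nat.le_one_iff_eq_zero_or_eq_one.1 h with h | h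
  · rw [hammingDist_eq_zero.1 h]
    exact le_mul_of_one_le_left (hD0 y) hα
  · exact hD x y h

lemma add {D' : (ι → Bool) → ℝ} (hD : IsLocallySmooth α D) (hD' : IsLocallySmooth α D') :
    IsLocallySmooth α (D + D') := fun x y h => by
  simpa [mul_add] using add_le_add (hD x y h) (hD' x y h)

variable [DecidableEq ι]

lemma update_le (hα : 1 ≤ α) (hD0 : 0 ≤ D) (hD : IsLocallySmooth α D) (x : ι → Bool) (i : ι)
    (a b : Bool) : D (update x i a) ≤ α * D (update x i b) :=
  hD.le_mul_of_hammingDist_le_one hα hD0 <| by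
    simpa using hammingDist_update_le_one (update x i a) i b

lemma comp_update (hα : 1 ≤ α) (hD0 : 0 ≤ D) (hD : IsLocallySmooth α D) (i : ι) (b : Bool) :
    IsLocallySmooth α fun x => D (update x i b) := fun x y h =>
  hD.le_mul_of_hammingDist_le_one hα hD0 ((hammingDist_update_update_le x y i b).trans h.le)

end IsLocallySmooth

noncomputable def sparsityBound (α : ℝ) (m : ℕ) : ℝ := (1 / (1 + α)) ^ logb 2 (m : ℝ)

section SparsityBound

variable {α : ℝ}

lemma sparsityBound_le_of_le (hα : 0 ≤ α) {k m : ℕ} (hk : 1 ≤ k) (hkm : k ≤ m) :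
    sparsityBound α m ≤ sparsityBound α k := by
  have hk0 : (0 : ℝ) < k := by exact_mod_cast hk
  refine rpow_le_rpow_of_exponent_ge (by positivity) ?_
    ((logb_le_logb one_lt_two hk0 (hk0.trans_le (by exact_mod_cast hkm))).2 (by exact_mod_cast hkm))
  rw [div_le_one] <;> linarith

lemma sparsityBound_le_mul_of_two_mul_le (hα : 0 ≤ α) {k m : ℕ} (hk : 1 ≤ k) (hkm : 2 * k ≤ m) :
    sparsityBound α m ≤ 1 / (1 + α) * sparsityBound α k := by
  have hk0 : (k : ℝ) ≠ 0 := by positivity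
  calc sparsityBound α m ≤ sparsityBound α (2 * k) := sparsityBound_le_of_le hα (by omega) hkm
    _ = 1 / (1 + α) * sparsityBound α k := by
        rw [sparsityBound, Nat.cast_mul, Nat.cast_two, logb_mul two_ne_zero hk0,
          logb_self_eq_one one_lt_two, rpow_add (by positivity), rpow_one, sparsityBound]

lemma sparsityBound_nonneg (hα : 0 ≤ α) (m : ℕ) : 0 ≤ sparsityBound α m := by
  unfold sparsityBound; positivity

end SparsityBound

lemma one_div_one_add_mul_add_le {α u v : ℝ} (hα : 0 < 1 + α) (h : v ≤ α * u) :
    1 / (1 + α) * (u + v) ≤ u := by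
  rw [one_div_mul_eq_div, div_le_iff₀ hα]
  linarith

variable [DecidableEq G]

lemma one_div_one_add_mul_sum_le_sum_add_sum {X : Type*} [Fintype X] {α : ℝ} (hα : 0 ≤ α)
    {u v : X → ℝ} (hu : 0 ≤ u) (hv : 0 ≤ v) (huv : ∀ x, u x ≤ α * v x) (hvu : ∀ x, v x ≤ α * u x)
    (f g : X → G) :
    1 / (1 + α) * ∑ x with g x ≠ 0, (u x + v x) ≤
      ∑ x with f x ≠ 0, u x + ∑ x with f x + g x ≠ 0, v x := by
  have hα' : 0 < 1 + α := by linarith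
  simp only [sum_filter, mul_sum, ← sum_add_distrib]
  refine sum_le_sum fun x _ => ?_
  have hvite : 0 ≤ if f x + g x ≠ 0 then v x else 0 := ite_nonneg (hv x) le_rfl
  by_cases hg : g x = 0
  · have huite : 0 ≤ if f x ≠ 0 then u x else 0 := ite_nonneg (hu x) le_rfl
    simpa [hg] using add_nonneg huite hvite
  rw [if_pos hg]
  by_cases hf : f x = 0
  · rw [if_neg (not_not.2 hf), if_pos (by simpa [hf]), zero_add, add_comm (u x)]
    exact one_div_one_add_mul_add_le hα' (huv x)
  · rw [if_pos hf]
    exact (one_div_one_add_mul_add_le hα' (hvu x)).trans (le_add_of_nonneg_right hvite)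

variable [DecidableEq ι]

/-- Stated for unnormalised weights, so that it applies directly to the slices
`fun x => D (update x i b)`. -/
def HasNonvanishingBound (α : ℝ) (c : Finset ι → G) : Prop :=
  ∀ D : (ι → Bool) → ℝ, 0 ≤ D → IsLocallySmooth α D →
    sparsityBound α #(supp c) * ∑ x, D x ≤ ∑ x with eval c x ≠ 0, D x

lemma HasNonvanishingBound.of_supp_eq_singleton_empty {α : ℝ} {c : Finset ι → G}
    (hs : supp c = {∅}) : HasNonvanishingBound α c := by
  have hc : c ∅ ≠ 0 := mem_supp.1 (hs ▸ mem_singleton_self ∅)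
  have heval (x : ι → Bool) : eval c x = c ∅ :=
    sum_eq_single ∅ (fun T _ hT => not_not.1 fun h => hT (mem_singleton.1 (hs ▸ mem_supp.2 h)))
      (by simp)
  intro D _ _
  simp [sparsityBound, hs, heval, hc]

lemma two_mul_sum_eval_ne_zero (c : Finset ι → G) (i : ι) (D : (ι → Bool) → ℝ) :
    2 * ∑ x with eval c x ≠ 0, D x =
      ∑ x with eval (restrictZero i c) x ≠ 0, D (update x i false) +
        ∑ x with eval (restrictZero i c + pderiv i c) x ≠ 0, D (update x i true) := by
  rw [sum_filter, two_mul,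
    ← sum_comp_update_false_add_sum_comp_update_true (fun x => if eval c x ≠ 0 then D x else 0) i]
  simp only [sum_filter, eval_update_false, eval_update_true, eval_add]

lemma HasNonvanishingBound.of_slices {α : ℝ} (hα : 1 ≤ α) {i : ι} {c : Finset ι → G}
    (hc : c ∅ ≠ 0) (hc1 : c ∅ + c {i} ≠ 0)
    (h0 : HasNonvanishingBound α (restrictZero i c))
    (h1 : HasNonvanishingBound α (restrictZero i c + pderiv i c)) :
    HasNonvanishingBound α c := by
  intro D hD0 hD
  have hcard := card_supp_restrictZero_add_card_supp_pderiv i c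
  have hB0 := sparsityBound_le_of_le (by linarith : 0 ≤ α)
    (one_le_card_supp (c := restrictZero i c) (by simpa [restrictZero])) (hcard ▸ le_self_add)
  have hB1 := sparsityBound_le_of_le (by linarith : 0 ≤ α)
    (one_le_card_supp (c := restrictZero i c + pderiv i c) (by simpa [restrictZero, pderiv]))
    ((card_supp_add_le _ _).trans hcard.le)
  have hsum := sum_comp_update_false_add_sum_comp_update_true D i
  calc sparsityBound α #(supp c) * ∑ x, D x
      = (sparsityBound α #(supp c) * ∑ x, D (update x i false) +
          sparsityBound α #(supp c) * ∑ x, D (update x i true)) / 2 := by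
        rw [← mul_add, hsum]; ring
    _ ≤ (sparsityBound α #(supp (restrictZero i c)) * ∑ x, D (update x i false) +
          sparsityBound α #(supp (restrictZero i c + pderiv i c)) *
            ∑ x, D (update x i true)) / 2 := by
        gcongr <;> exact sum_nonneg fun x _ => hD0 _
    _ ≤ (∑ x with eval (restrictZero i c) x ≠ 0, D (update x i false) +
          ∑ x with eval (restrictZero i c + pderiv i c) x ≠ 0, D (update x i true)) / 2 := by
        gcongr
        · exact h0 _ (fun x => hD0 (update x i false)) (hD.comp_update hα hD0 i false)
        · exact h1 _ (fun x => hD0 (update x i true)) (hD.comp_update hα hD0 i true)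
    _ = ∑ x with eval c x ≠ 0, D x := by rw [← two_mul_sum_eval_ne_zero]; ring

lemma HasNonvanishingBound.of_restrictZero {α : ℝ} (hα : 1 ≤ α) {i : ι} {c : Finset ι → G}
    (hc : c ∅ ≠ 0) (hcard : 2 * #(supp (restrictZero i c)) ≤ #(supp c))
    (h0 : HasNonvanishingBound α (restrictZero i c)) : HasNonvanishingBound α c := by
  intro D hD0 hD
  have hα' : 0 < 1 + α := by linarith
  have hB := sparsityBound_le_mul_of_two_mul_le (by linarith)
    (one_le_card_supp (c := restrictZero i c) (by simpa [restrictZero])) hcard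
  have hsum := sum_comp_update_false_add_sum_comp_update_true D i
  have hshare : 1 / (1 + α) * (∑ x, D (update x i false) + ∑ x, D (update x i true)) ≤
      ∑ x, D (update x i false) := by
    refine one_div_one_add_mul_add_le hα' ?_
    rw [mul_sum]
    exact sum_le_sum fun x _ => hD.update_le hα hD0 x i true false
  have hZ1 : 0 ≤ ∑ x with eval (restrictZero i c + pderiv i c) x ≠ 0, D (update x i true) :=
    sum_nonneg fun x _ => hD0 _
  calc sparsityBound α #(supp c) * ∑ x, D x
      ≤ 1 / (1 + α) * sparsityBound α #(supp (restrictZero i c)) * ∑ x, D x := by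
        gcongr
        exact sum_nonneg fun x _ => hD0 x
    _ = sparsityBound α #(supp (restrictZero i c)) *
          (1 / (1 + α) * (∑ x, D (update x i false) + ∑ x, D (update x i true))) / 2 := by
        rw [hsum]; ring
    _ ≤ sparsityBound α #(supp (restrictZero i c)) * (∑ x, D (update x i false)) / 2 := by
        gcongr
        exact sparsityBound_nonneg (by linarith) _
    _ ≤ (∑ x with eval (restrictZero i c) x ≠ 0, D (update x i false)) / 2 := by
        gcongr
        exact h0 _ (fun x => hD0 (update x i false)) (hD.comp_update hα hD0 i false)
    _ ≤ ∑ x with eval c x ≠ 0, D x := by linarith [two_mul_sum_eval_ne_zero c i D]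

lemma HasNonvanishingBound.of_pderiv {α : ℝ} (hα : 1 ≤ α) {i : ι} {c : Finset ι → G}
    (hci : c {i} ≠ 0) (hcard : 2 * #(supp (pderiv i c)) ≤ #(supp c))
    (hh : HasNonvanishingBound α (pderiv i c)) : HasNonvanishingBound α c := by
  intro D hD0 hD
  have hB := sparsityBound_le_mul_of_two_mul_le (by linarith)
    (one_le_card_supp (c := pderiv i c) (by simpa [pderiv])) hcard
  have hsum := sum_comp_update_false_add_sum_comp_update_true D i
  have hM := hh (fun x => D (update x i false) + D (update x i true))
    (fun x => add_nonneg (hD0 _) (hD0 _))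
    ((hD.comp_update hα hD0 i false).add (hD.comp_update hα hD0 i true))
  have hpair := one_div_one_add_mul_sum_le_sum_add_sum (by linarith)
    (fun x => hD0 (update x i false)) (fun x => hD0 (update x i true))
    (fun x => hD.update_le hα hD0 x i false true) (fun x => hD.update_le hα hD0 x i true false)
    (eval (restrictZero i c)) (eval (pderiv i c))
  simp only [← eval_add] at hpair
  calc sparsityBound α #(supp c) * ∑ x, D x
      ≤ 1 / (1 + α) * sparsityBound α #(supp (pderiv i c)) * ∑ x, D x := by
        gcongr
        exact sum_nonneg fun x _ => hD0 x
    _ = 1 / (1 + α) * (sparsityBound α #(supp (pderiv i c)) *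
          ∑ x, (D (update x i false) + D (update x i true))) / 2 := by
        rw [sum_add_distrib, hsum]; ring
    _ ≤ 1 / (1 + α) * (∑ x with eval (pderiv i c) x ≠ 0,
          (D (update x i false) + D (update x i true))) / 2 := by
        gcongr
    _ ≤ ∑ x with eval c x ≠ 0, D x := by linarith [two_mul_sum_eval_ne_zero c i D]

theorem hasNonvanishingBound {α : ℝ} (hα : 1 ≤ α) {c : Finset ι → G} (hc : c ∅ ≠ 0) :
    HasNonvanishingBound α c := by
  suffices ∀ s : Finset ι, ∀ c : Finset ι → G, supp c ⊆ s.powerset → c ∅ ≠ 0 →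
      HasNonvanishingBound α c from this univ c (by simp) hc
  intro s
  induction s using Finset.induction_on with
  | empty =>
    intro c hs hc
    exact .of_supp_eq_singleton_empty (hs.antisymm (by simpa using hc))
  | insert i s _ ih =>
    intro c hs hc
    have h0 := ih _ (supp_restrictZero_subset_powerset hs) (by simpa [restrictZero])
    by_cases hc1 : c ∅ + c {i} ≠ 0
    · exact .of_slices hα hc hc1 h0
        (ih _ (supp_add_subset_powerset (supp_restrictZero_subset_powerset hs)
          (supp_pderiv_subset_powerset hs)) (by simpa [restrictZero, pderiv]))
    have hci : c {i} ≠ 0 := fun h => hc1 (by simpa [h])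
    have hcard := card_supp_restrictZero_add_card_supp_pderiv i c
    by_cases h2 : 2 * #(supp (restrictZero i c)) ≤ #(supp c)
    · exact .of_restrictZero hα hc h2 h0
    · exact .of_pderiv hα hci (by omega) (ih _ (supp_pderiv_subset_powerset hs) (by simpa [pderiv]))

end SparseMultilinear

open SparseMultilinear in
theorem sparse_poly_nonzero_prob (n t : ℕ)
    (c : Finset (Fin n) → ℝ)
    (hsparse : (univ.filter (fun T : Finset (Fin n) => c T ≠ 0)).card ≤ t)
    (hconst : c ∅ ≠ 0)
    (α : ℝ) (hα : 1 ≤ α)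
    (D : (Fin n → Bool) → ℝ) (hD0 : ∀ x, 0 ≤ D x) (hD1 : ∑ x, D x = 1)
    (hsmooth : ∀ x x' : Fin n → Bool, hammingDist x x' = 1 → D x ≤ α * D x') :
    (1 / (1 + α)) ^ (Real.logb 2 t) ≤
      ∑ x ∈ univ.filter (fun x : Fin n → Bool =>
        (∑ T : Finset (Fin n), c T * ∏ i ∈ T, (if x i then (1 : ℝ) else 0)) ≠ 0),
        D x := by
  have h := hasNonvanishingBound hα hconst D hD0 hsmooth
  simp only [hD1, mul_one, eval_eq_sum_mul_prod] at h
  exact (sparsityBound_le_of_le (by linarith) (one_le_card_supp hconst) hsparse).trans h
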